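/- arXiv:2411.02664 — 5 statements merged into one kernel-verified Lean document; each statement's English description precedes it below -/
import Mathlib

section
/- The EVAL-X optimality gap of an explanation e equals the expected KL divergence between the full conditional q(y|x) and the subset conditional q(y|x_{e(x)}): E_q[log q(y|x)] − E_q[log q(y | x_{e(x)})] = E_{v∼q(e(x))} E_{x | e(x)=v} [KL(q(y|x) ‖ q(y|x_v))], and this gap is zero if and only if for every v with P(e(x)=v) > 0, q(y|x) = q(y|x_v) for every x in the support with e(x) = v. -/
/-!
By the tower property, each expected log-likelihood `E[log q(y | ·)]` is the `p`-average of a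
sum against the full conditional law `q(· | x)`, so the gap is the `p`-average of the
divergences `KL(q(· | x) ‖ q(· | x_v))`. Writing `a log (a / b) = b klFun (a / b) + (a - b)`
with `klFun ≥ 0` vanishing only at `1` (Gibbs' inequality), every divergence is nonnegative and
vanishes only when the two conditional laws agree, so the average vanishes iff this holds at
every point of positive mass.
-/

open scoped Classical

/-- Probability of an event under a probability mass function on a finite space. -/
noncomputable def Pr {Ω : Type*} [Fintype Ω] (p : Ω → ℝ) (E : Ω → Prop) : ℝ :=
  ∑ ω, if E ω then p ω else 0

/-- Conditional probability `P(A | B)`. -/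
noncomputable def cPr {Ω : Type*} [Fintype Ω] (p : Ω → ℝ) (A B : Ω → Prop) : ℝ :=
  Pr p (fun ω => A ω ∧ B ω) / Pr p B

open Finset Real InformationTheory

section ConditionalProbability

variable {Ω : Type*} [Fintype Ω] {p : Ω → ℝ}

lemma Pr_eq_sum_filter (p : Ω → ℝ) (E : Ω → Prop) : Pr p E = ∑ ω ∈ univ.filter E, p ω :=
  (sum_filter E p).symm

lemma Pr_nonneg (hp : ∀ ω, 0 ≤ p ω) (E : Ω → Prop) : 0 ≤ Pr p E := by
  rw [Pr_eq_sum_filter]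
  exact sum_nonneg fun ω _ => hp ω

lemma le_Pr_of_mem (hp : ∀ ω, 0 ≤ p ω) {E : Ω → Prop} {ω : Ω} (hE : E ω) : p ω ≤ Pr p E := by
  rw [Pr_eq_sum_filter]
  exact single_le_sum (fun ω _ => hp ω) (mem_filter.2 ⟨mem_univ ω, hE⟩)

lemma cPr_nonneg (hp : ∀ ω, 0 ≤ p ω) (A B : Ω → Prop) : 0 ≤ cPr p A B :=
  div_nonneg (Pr_nonneg hp _) (Pr_nonneg hp _)

lemma sum_cPr_mul {Y : Type*} [Fintype Y] (y : Ω → Y) (B : Ω → Prop) (f : Y → ℝ) :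
    ∑ y₀, cPr p (fun ω => y ω = y₀) B * f y₀
      = (∑ ω, if B ω then p ω * f (y ω) else 0) / Pr p B := by
  simp only [cPr, Pr, div_mul_eq_mul_div, ← sum_div, sum_mul]
  rw [sum_comm]
  congr 1
  refine sum_congr rfl fun ω _ => ?_
  by_cases hB : B ω <;> simp [hB]

lemma sum_cPr_eq_one {Y : Type*} [Fintype Y] (y : Ω → Y) {B : Ω → Prop} (hB : Pr p B ≠ 0) :
    ∑ y₀, cPr p (fun ω => y ω = y₀) B = 1 := by
  have h := sum_cPr_mul (p := p) y B fun _ => 1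
  simp only [mul_one] at h
  exact h.trans (div_self hB)

lemma sum_mul_fiber_average {K : Type*} (hp : ∀ ω, 0 ≤ p ω) (key : Ω → K) (G : K → Ω → ℝ) :
    ∑ ω, p ω * ((∑ ω', if key ω' = key ω then p ω' * G (key ω) ω' else 0)
        / Pr p (fun ω' => key ω' = key ω))
      = ∑ ω, p ω * G (key ω) ω := by
  calc _ = ∑ ω, ∑ ω', if key ω = key ω' then
        p ω * (p ω' * G (key ω') ω' / Pr p (fun ω'' => key ω'' = key ω')) else 0 := by
        refine sum_congr rfl fun ω _ => ?_
        rw [sum_div, mul_sum]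
        refine sum_congr rfl fun ω' _ => ?_
        by_cases h : key ω = key ω'
        · simp only [h, if_true]
        · simp [h, Ne.symm h]
    _ = ∑ ω', Pr p (fun ω => key ω = key ω')
          * (p ω' * G (key ω') ω' / Pr p (fun ω => key ω = key ω')) := by
        rw [sum_comm]
        simp only [Pr, sum_mul, ite_mul, zero_mul]
    _ = _ := by
        refine sum_congr rfl fun ω _ => ?_
        rcases (hp ω).eq_or_lt with h0 | hpos
        · simp [← h0]
        · have hfiber := le_Pr_of_mem hp (E := fun ω' => key ω' = key ω) rfl
          exact mul_div_cancel₀ _ (hpos.trans_le hfiber).ne'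

/-- The tower property of conditioning on `key`. -/
lemma sum_mul_sum_cPr_mul {Y K : Type*} [Fintype Y] (hp : ∀ ω, 0 ≤ p ω) (y : Ω → Y)
    (key : Ω → K) (F : K → Y → ℝ) :
    ∑ ω, p ω * ∑ y₀, cPr p (fun ω' => y ω' = y₀) (fun ω' => key ω' = key ω) * F (key ω) y₀
      = ∑ ω, p ω * F (key ω) (y ω) := by
  simp only [sum_cPr_mul]
  exact sum_mul_fiber_average hp key fun k ω => F k (y ω)

end ConditionalProbability

section Gibbs

variable {ι : Type*} [Fintype ι] {f g : ι → ℝ}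

lemma mul_log_div_eq_mul_klFun_add {a b : ℝ} (hb : b ≠ 0) :
    a * log (a / b) = b * klFun (a / b) + (a - b) := by
  rw [klFun_apply]
  field_simp
  ring

lemma sum_mul_log_div_eq_sum_mul_klFun (hg : ∀ i, 0 < g i) (hfg : ∑ i, f i = ∑ i, g i) :
    ∑ i, f i * log (f i / g i) = ∑ i, g i * klFun (f i / g i) := by
  simp only [mul_log_div_eq_mul_klFun_add (hg _).ne', sum_add_distrib, sum_sub_distrib, hfg,
    sub_self, add_zero]

lemma sum_mul_log_div_nonneg (hf : ∀ i, 0 ≤ f i) (hg : ∀ i, 0 < g i)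
    (hfg : ∑ i, f i = ∑ i, g i) : 0 ≤ ∑ i, f i * log (f i / g i) := by
  rw [sum_mul_log_div_eq_sum_mul_klFun hg hfg]
  exact sum_nonneg fun i _ => mul_nonneg (hg i).le (klFun_nonneg (div_nonneg (hf i) (hg i).le))

lemma sum_mul_log_div_eq_zero_iff (hf : ∀ i, 0 ≤ f i) (hg : ∀ i, 0 < g i)
    (hfg : ∑ i, f i = ∑ i, g i) : ∑ i, f i * log (f i / g i) = 0 ↔ ∀ i, f i = g i := by
  have hterm (i : ι) : 0 ≤ g i * klFun (f i / g i) :=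
    mul_nonneg (hg i).le (klFun_nonneg (div_nonneg (hf i) (hg i).le))
  rw [sum_mul_log_div_eq_sum_mul_klFun hg hfg, sum_eq_zero_iff_of_nonneg fun i _ => hterm i]
  refine forall_congr' fun i => ?_
  rw [mul_eq_zero_iff_left (hg i).ne', klFun_eq_zero_iff (div_nonneg (hf i) (hg i).le),
    div_eq_one_iff_eq (hg i).ne']
  simp

end Gibbs

lemma sum_mul_eq_zero_iff_of_nonneg {Ω : Type*} [Fintype Ω] {p a : Ω → ℝ} (hp : ∀ ω, 0 ≤ p ω)
    (ha : ∀ ω, 0 < p ω → 0 ≤ a ω) :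
    ∑ ω, p ω * a ω = 0 ↔ ∀ ω, 0 < p ω → a ω = 0 := by
  have hterm (ω : Ω) : 0 ≤ p ω * a ω := by
    rcases (hp ω).eq_or_lt with h0 | hpos
    · simp [← h0]
    · exact mul_nonneg hpos.le (ha ω hpos)
  rw [sum_eq_zero_iff_of_nonneg fun ω _ => hterm ω]
  refine forall_congr' fun ω => ?_
  rw [(hp ω).lt_iff_ne', mul_eq_zero, or_iff_not_imp_left]
  simp

section ExpectedKL

variable {Ω Y K : Type*} [Fintype Ω] [Fintype Y] {p : Ω → ℝ}

lemma sum_cPr_mul_log_div_nonneg_and_eq_zero_iff (hp : ∀ ω, 0 ≤ p ω) (y : Ω → Y)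
    {B C : Ω → Prop} {ω : Ω} (hω : 0 < p ω) (hBω : B ω) (hCω : C ω)
    (hC : ∀ y₀, 0 < cPr p (fun ω' => y ω' = y₀) C) :
    0 ≤ ∑ y₀, cPr p (fun ω' => y ω' = y₀) B *
        log (cPr p (fun ω' => y ω' = y₀) B / cPr p (fun ω' => y ω' = y₀) C) ∧
      (∑ y₀, cPr p (fun ω' => y ω' = y₀) B *
          log (cPr p (fun ω' => y ω' = y₀) B / cPr p (fun ω' => y ω' = y₀) C) = 0 ↔
        ∀ y₀, cPr p (fun ω' => y ω' = y₀) B = cPr p (fun ω' => y ω' = y₀) C) := by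
  have hsum : ∑ y₀, cPr p (fun ω' => y ω' = y₀) B = ∑ y₀, cPr p (fun ω' => y ω' = y₀) C := by
    rw [sum_cPr_eq_one y (hω.trans_le (le_Pr_of_mem hp hBω)).ne',
      sum_cPr_eq_one y (hω.trans_le (le_Pr_of_mem hp hCω)).ne']
  exact ⟨sum_mul_log_div_nonneg (fun _ => cPr_nonneg hp _ _) hC hsum,
    sum_mul_log_div_eq_zero_iff (fun _ => cPr_nonneg hp _ _) hC hsum⟩

lemma sum_mul_log_cPr_sub_eq_sum_mul_kl (hp : ∀ ω, 0 ≤ p ω) (y : Ω → Y) (key : Ω → K)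
    (C : K → Ω → Prop)
    (hfull : ∀ y₀ ω, 0 < p ω → 0 < cPr p (fun ω' => y ω' = y₀) (fun ω' => key ω' = key ω))
    (hsel : ∀ y₀ ω, 0 < p ω → 0 < cPr p (fun ω' => y ω' = y₀) (C (key ω))) :
    ∑ ω, p ω * log (cPr p (fun ω' => y ω' = y ω) (fun ω' => key ω' = key ω))
        - ∑ ω, p ω * log (cPr p (fun ω' => y ω' = y ω) (C (key ω)))
      = ∑ ω, p ω * ∑ y₀, cPr p (fun ω' => y ω' = y₀) (fun ω' => key ω' = key ω) *
          log (cPr p (fun ω' => y ω' = y₀) (fun ω' => key ω' = key ω)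
            / cPr p (fun ω' => y ω' = y₀) (C (key ω))) := by
  rw [← sum_mul_sum_cPr_mul hp y key
      fun k y₀ => log (cPr p (fun ω' => y ω' = y₀) (fun ω' => key ω' = k)),
    ← sum_mul_sum_cPr_mul hp y key fun k y₀ => log (cPr p (fun ω' => y ω' = y₀) (C k)),
    ← sum_sub_distrib]
  refine sum_congr rfl fun ω _ => ?_
  rcases (hp ω).eq_or_lt with h0 | hω
  · simp [← h0]
  · simp only [← mul_sub, ← sum_sub_distrib, log_div (hfull _ ω hω).ne' (hsel _ ω hω).ne']

lemma sum_mul_kl_eq_zero_iff (hp : ∀ ω, 0 ≤ p ω) (y : Ω → Y) (key : Ω → K)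
    (C : K → Ω → Prop) (hmem : ∀ ω, C (key ω) ω)
    (hsel : ∀ y₀ ω, 0 < p ω → 0 < cPr p (fun ω' => y ω' = y₀) (C (key ω))) :
    ∑ ω, p ω * ∑ y₀, cPr p (fun ω' => y ω' = y₀) (fun ω' => key ω' = key ω) *
          log (cPr p (fun ω' => y ω' = y₀) (fun ω' => key ω' = key ω)
            / cPr p (fun ω' => y ω' = y₀) (C (key ω))) = 0 ↔
      ∀ ω, 0 < p ω → ∀ y₀, cPr p (fun ω' => y ω' = y₀) (fun ω' => key ω' = key ω)
        = cPr p (fun ω' => y ω' = y₀) (C (key ω)) := by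
  have hkl (ω : Ω) (hω : 0 < p ω) :=
    sum_cPr_mul_log_div_nonneg_and_eq_zero_iff hp y (B := fun ω' => key ω' = key ω) hω rfl
      (hmem ω) (hsel · ω hω)
  rw [sum_mul_eq_zero_iff_of_nonneg hp fun ω hω => (hkl ω hω).1]
  exact forall₂_congr fun ω hω => (hkl ω hω).2

end ExpectedKL

theorem evalx_gap_eq_expected_KL_general
    {Ω A Y : Type*} [Fintype Ω] [Fintype Y] {d : ℕ}
    (p : Ω → ℝ) (hp : ∀ ω, 0 ≤ p ω)
    (x : Ω → Fin d → A) (y : Ω → Y)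
    (e : (Fin d → A) → (Fin d → Bool))
    (hposfull : ∀ (y₀ : Y) (ω : Ω), 0 < p ω →
      0 < cPr p (fun ω' => y ω' = y₀) (fun ω' => x ω' = x ω))
    (hposv : ∀ (y₀ : Y) (ω : Ω), 0 < p ω →
      0 < cPr p (fun ω' => y ω' = y₀)
            (fun ω' => ∀ i, e (x ω) i = true → x ω' i = x ω i)) :
    ((∑ ω, p ω * Real.log (cPr p (fun ω' => y ω' = y ω) (fun ω' => x ω' = x ω)))
        - (∑ ω, p ω * Real.log (cPr p (fun ω' => y ω' = y ω)
            (fun ω' => ∀ i, e (x ω) i = true → x ω' i = x ω i)))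
      = ∑ ω, p ω *
          (∑ y₀, cPr p (fun ω' => y ω' = y₀) (fun ω' => x ω' = x ω) *
            Real.log (cPr p (fun ω' => y ω' = y₀) (fun ω' => x ω' = x ω)
              / cPr p (fun ω' => y ω' = y₀)
                  (fun ω' => ∀ i, e (x ω) i = true → x ω' i = x ω i))))
    ∧ (((∑ ω, p ω * Real.log (cPr p (fun ω' => y ω' = y ω) (fun ω' => x ω' = x ω)))
        - (∑ ω, p ω * Real.log (cPr p (fun ω' => y ω' = y ω)
            (fun ω' => ∀ i, e (x ω) i = true → x ω' i = x ω i))) = 0)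
      ↔ (∀ ω, 0 < p ω → ∀ y₀ : Y,
          cPr p (fun ω' => y ω' = y₀) (fun ω' => x ω' = x ω)
            = cPr p (fun ω' => y ω' = y₀)
                (fun ω' => ∀ i, e (x ω) i = true → x ω' i = x ω i))) := by
  have gap := sum_mul_log_cPr_sub_eq_sum_mul_kl hp y x
    (fun k ω' => ∀ i, e k i = true → x ω' i = k i) hposfull hposv
  beta_reduce at gap
  refine ⟨gap, ?_⟩
  rw [gap]
  exact sum_mul_kl_eq_zero_iff hp y x (fun k ω' => ∀ i, e k i = true → x ω' i = k i)
    (fun _ _ _ => rfl) hposv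

/-- the EVAL-X optimality gap of an explanation `e` equals the expected KL
divergence between the full conditional `q(y|x)` and the subset conditional
`q(y|x_{e(x)})`, and the gap is zero iff for every selection with positive probability the
two conditionals agree on the support. -/
theorem evalx_gap_eq_expected_KL
    {Ω A Y : Type*} [Fintype Ω] [Fintype Y] {d : ℕ}
    (p : Ω → ℝ) (hp : ∀ ω, 0 ≤ p ω) (hsum : ∑ ω, p ω = 1)
    (x : Ω → Fin d → A) (y : Ω → Y)
    (e : (Fin d → A) → (Fin d → Bool))
    (hposfull : ∀ (y₀ : Y) (ω : Ω), 0 < p ω →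
      0 < cPr p (fun ω' => y ω' = y₀) (fun ω' => x ω' = x ω))
    (hposv : ∀ (y₀ : Y) (ω : Ω), 0 < p ω →
      0 < cPr p (fun ω' => y ω' = y₀)
            (fun ω' => ∀ i, e (x ω) i = true → x ω' i = x ω i)) :
    ((∑ ω, p ω * Real.log (cPr p (fun ω' => y ω' = y ω) (fun ω' => x ω' = x ω)))
        - (∑ ω, p ω * Real.log (cPr p (fun ω' => y ω' = y ω)
            (fun ω' => ∀ i, e (x ω) i = true → x ω' i = x ω i)))
      = ∑ ω, p ω *
          (∑ y₀, cPr p (fun ω' => y ω' = y₀) (fun ω' => x ω' = x ω) *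
            Real.log (cPr p (fun ω' => y ω' = y₀) (fun ω' => x ω' = x ω)
              / cPr p (fun ω' => y ω' = y₀)
                  (fun ω' => ∀ i, e (x ω) i = true → x ω' i = x ω i))))
    ∧ (((∑ ω, p ω * Real.log (cPr p (fun ω' => y ω' = y ω) (fun ω' => x ω' = x ω)))
        - (∑ ω, p ω * Real.log (cPr p (fun ω' => y ω' = y ω)
            (fun ω' => ∀ i, e (x ω) i = true → x ω' i = x ω i))) = 0)
      ↔ (∀ ω, 0 < p ω → ∀ y₀ : Y,
          cPr p (fun ω' => y ω' = y₀) (fun ω' => x ω' = x ω)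
            = cPr p (fun ω' => y ω' = y₀)
                (fun ω' => ∀ i, e (x ω) i = true → x ω' i = x ω i))) :=
  evalx_gap_eq_expected_KL_general p hp x y e hposfull hposv
end

section
/- In the three-bit DGP, the 'marginal' explanation e_encode (select coordinate 1 if x₃ = 1, coordinate 2 if x₃ = 0) is encoding: conditional on x₁ = a and E_{ξ₁} = 1 the label distribution is P(y = a) = 0.9, while conditional on x₁ = a and E_{ξ₁} = 0 it is P(y = a) = 0.5, and 0 < P(E_{ξ₁} = 1 | x₁ = a) < 1; hence y is conditionally dependent on E_{ξ₁} given x₁. -/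
open scoped Classical

/-- Conditional independence of a (finite-valued) random variable `y` and a binary
variable given by the event `E`, given the conditioning event `C`. -/
def CondIndepBin {Ω Y : Type*} [Fintype Ω] (p : Ω → ℝ) (y : Ω → Y) (E C : Ω → Prop) : Prop :=
  ∀ y₀ : Y,
    cPr p (fun ω => y ω = y₀ ∧ E ω) C
        = cPr p (fun ω => y ω = y₀) C * cPr p E C ∧
    cPr p (fun ω => y ω = y₀ ∧ ¬ E ω) C
        = cPr p (fun ω => y ω = y₀) C * cPr p (fun ω => ¬ E ω) C

/-- The three-bit DGP: `(x₁,x₂,x₃)` uniform on `{0,1}³` together with an independent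
"flip" bit that is `true` with probability `0.1`. -/
noncomputable def pTB : (Bool × Bool × Bool) × Bool → ℝ := fun ω =>
  (1 / 8 : ℝ) * (if ω.2 = true then (0.1 : ℝ) else (0.9 : ℝ))

/-- The label: `y = x₁ ⊕ flip` if `x₃ = 1`, and `y = x₂ ⊕ flip` if `x₃ = 0`; hence
`y = x₁` w.p. `0.9` when `x₃ = 1`, and `y = x₂` w.p. `0.9` when `x₃ = 0`. -/
def yTB : (Bool × Bool × Bool) × Bool → Bool := fun ω =>
  if ω.1.2.2 = true then xor ω.1.1 ω.2 else xor ω.1.2.1 ω.2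

/-! If `y` is conditionally independent of `E` given `C` and both `E` and `¬E` have positive
conditional probability given `C`, then the law of `y` is the same on `C ∧ E` and on `C ∧ ¬E`.
In the three-bit model, given `x₁ = a`, the label agrees with `a` with probability `0.9` on
`x₃ = 1` but only `0.5` on `x₃ = 0`, where it copies the independent bit `x₂`. -/

section General

variable {Ω Y : Type*} [Fintype Ω] {p : Ω → ℝ}

theorem Pr_congr {A B : Ω → Prop} (h : ∀ ω, A ω ↔ B ω) : Pr p A = Pr p B := by
  rw [show A = B from funext fun ω => propext (h ω)]

theorem Pr_ne_zero_of_cPr_ne_zero {A C : Ω → Prop} (h : cPr p A C ≠ 0) : Pr p C ≠ 0 := by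
  rintro hC
  exact h (by rw [cPr, hC, div_zero])

theorem cPr_and_right {A B C : Ω → Prop} (hB : cPr p B C ≠ 0) :
    cPr p A (fun ω => C ω ∧ B ω) = cPr p (fun ω => A ω ∧ B ω) C / cPr p B C := by
  have hAB : Pr p (fun ω => A ω ∧ C ω ∧ B ω) = Pr p (fun ω => (A ω ∧ B ω) ∧ C ω) :=
    Pr_congr fun ω => by tauto
  have hB' : Pr p (fun ω => C ω ∧ B ω) = Pr p (fun ω => B ω ∧ C ω) :=
    Pr_congr fun ω => and_comm
  simp only [cPr]
  rw [div_div_div_cancel_right₀ (Pr_ne_zero_of_cPr_ne_zero hB), hAB, hB']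

theorem CondIndepBin.cPr_and_eq_cPr_and_not {y : Ω → Y} {E C : Ω → Prop}
    (h : CondIndepBin p y E C) (y₀ : Y) (hE : cPr p E C ≠ 0)
    (hnE : cPr p (fun ω => ¬ E ω) C ≠ 0) :
    cPr p (fun ω => y ω = y₀) (fun ω => C ω ∧ E ω)
      = cPr p (fun ω => y ω = y₀) (fun ω => C ω ∧ ¬ E ω) := by
  rw [cPr_and_right hE, cPr_and_right hnE, (h y₀).1, (h y₀).2,
    mul_div_cancel_right₀ _ hE, mul_div_cancel_right₀ _ hnE]

end General

section ThreeBit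

variable (a : Bool)

theorem cPr_x₃_given_x₁ :
    cPr pTB (fun ω => ω.1.2.2 = true) (fun ω => ω.1.1 = a) = 1 / 2 := by
  cases a <;> norm_num [cPr, Pr, pTB, Fintype.sum_prod_type]

theorem cPr_not_x₃_given_x₁ :
    cPr pTB (fun ω => ¬ ω.1.2.2 = true) (fun ω => ω.1.1 = a) = 1 / 2 := by
  cases a <;> norm_num [cPr, Pr, pTB, Fintype.sum_prod_type]

theorem cPr_yTB_given_x₁_x₃_true :
    cPr pTB (fun ω => yTB ω = a) (fun ω => ω.1.1 = a ∧ ω.1.2.2 = true) = 0.9 := by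
  cases a <;> norm_num [cPr, Pr, pTB, yTB, Fintype.sum_prod_type]

theorem cPr_yTB_given_x₁_x₃_false :
    cPr pTB (fun ω => yTB ω = a) (fun ω => ω.1.1 = a ∧ ω.1.2.2 = false) = 0.5 := by
  cases a <;> norm_num [cPr, Pr, pTB, yTB, Fintype.sum_prod_type]

end ThreeBit

/-- in the three-bit DGP, the explanation `e_encode` (select coordinate 1
iff `x₃ = 1`), whose indicator `E_{ξ₁}` is the event `x₃ = 1`, is encoding:
`P(E_{ξ₁}=1 | x₁=a) = 1/2`, `P(y=a | x₁=a, E_{ξ₁}=1) = 0.9`,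
`P(y=a | x₁=a, E_{ξ₁}=0) = 0.5`, so `y ⫫ E_{ξ₁} | x₁` fails. -/
theorem three_bit_marg_explanation_encodes :
    ∀ a : Bool,
      cPr pTB (fun ω => ω.1.2.2 = true) (fun ω => ω.1.1 = a) = 1 / 2
      ∧ cPr pTB (fun ω => yTB ω = a) (fun ω => ω.1.1 = a ∧ ω.1.2.2 = true) = 0.9
      ∧ cPr pTB (fun ω => yTB ω = a) (fun ω => ω.1.1 = a ∧ ω.1.2.2 = false) = 0.5
      ∧ ¬ CondIndepBin pTB yTB (fun ω => ω.1.2.2 = true) (fun ω => ω.1.1 = a) := by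
  intro a
  refine ⟨cPr_x₃_given_x₁ a, cPr_yTB_given_x₁_x₃_true a, cPr_yTB_given_x₁_x₃_false a,
    fun hind => ?_⟩
  have hsame := hind.cPr_and_eq_cPr_and_not a (by rw [cPr_x₃_given_x₁]; norm_num)
    (by rw [cPr_not_x₃_given_x₁]; norm_num)
  simp only [Bool.not_eq_true] at hsame
  rw [cPr_yTB_given_x₁_x₃_true, cPr_yTB_given_x₁_x₃_false] at hsame
  norm_num at hsame
end

section
/- In the three-bit DGP, the unselected inputs under e_encode are jointly independent of the label: with e_encode selecting x₁ when x₃=1 and x₂ when x₃=0, the pair (unselected informative input, x₃) is independent of y; consequently ROAR scores e_encode optimally. -/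
/-!
Conditionally on the unselected pair `(x_{-e(x)}, x₃)`, the label is the selected bit XOR an
independent flip. Toggling the selected bit preserves the distribution and the unselected pair
but negates the label, so each label value carries exactly half of the mass of every event
about the unselected pair; in particular `P(y = c) = 1/2`, which gives the product formula.
-/

open scoped Classical

section Pr

variable {Ω : Type*} [Fintype Ω] (p : Ω → ℝ)

theorem Pr_comp_equiv (σ : Ω ≃ Ω) (hσ : ∀ ω, p (σ ω) = p ω) (E : Ω → Prop) :
    Pr p (fun ω => E (σ ω)) = Pr p E := by
  unfold Pr
  conv_lhs => enter [2, ω]; rw [← hσ ω]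
  exact Equiv.sum_comp σ (fun ω => if E ω then p ω else 0)

theorem Pr_and_add_Pr_and_not (A B : Ω → Prop) :
    Pr p (fun ω => A ω ∧ B ω) + Pr p (fun ω => A ω ∧ ¬B ω) = Pr p A := by
  unfold Pr
  rw [← Finset.sum_add_distrib]
  refine Finset.sum_congr rfl fun ω _ => ?_
  by_cases hA : A ω <;> by_cases hB : B ω <;> simp [hA, hB]

theorem Pr_and_eq_half_of_negating_equiv (σ : Ω ≃ Ω) (hσ : ∀ ω, p (σ ω) = p ω)
    (A : Ω → Prop) (hA : ∀ ω, A (σ ω) ↔ A ω) (Y : Ω → Bool) (hY : ∀ ω, Y (σ ω) = !Y ω)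
    (c : Bool) : Pr p (fun ω => A ω ∧ Y ω = c) = Pr p A / 2 := by
  have hswap : Pr p (fun ω => A ω ∧ ¬Y ω = c) = Pr p (fun ω => A ω ∧ Y ω = c) := by
    rw [← Pr_comp_equiv p σ hσ]
    congr 1
    funext ω
    rw [hA, hY]
    cases Y ω <;> cases c <;> simp
  linarith [Pr_and_add_Pr_and_not p A (fun ω => Y ω = c)]

end Pr

/-- Toggles the bit that `e_encode` selects. -/
def flipSelectedTB (ω : (Bool × Bool × Bool) × Bool) : (Bool × Bool × Bool) × Bool :=
  if ω.1.2.2 = true then ((!ω.1.1, ω.1.2.1, ω.1.2.2), ω.2)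
  else ((ω.1.1, !ω.1.2.1, ω.1.2.2), ω.2)

theorem flipSelectedTB_involutive : Function.Involutive flipSelectedTB := by
  rintro ⟨⟨x₁, x₂, x₃⟩, f⟩
  cases x₃ <;> simp [flipSelectedTB]

theorem pTB_flipSelectedTB (ω : (Bool × Bool × Bool) × Bool) :
    pTB (flipSelectedTB ω) = pTB ω := by
  unfold flipSelectedTB
  split_ifs <;> rfl

theorem yTB_flipSelectedTB (ω : (Bool × Bool × Bool) × Bool) :
    yTB (flipSelectedTB ω) = !yTB ω := by
  obtain ⟨⟨x₁, x₂, x₃⟩, f⟩ := ω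
  cases x₃ <;> simp [flipSelectedTB, yTB]

/-- The unselected inputs `x_{-e(x)}` of `e_encode`. -/
def unselectedTB (ω : (Bool × Bool × Bool) × Bool) : Bool × Bool :=
  ((if ω.1.2.2 = true then ω.1.2.1 else ω.1.1), ω.1.2.2)

theorem unselectedTB_flipSelectedTB (ω : (Bool × Bool × Bool) × Bool) :
    unselectedTB (flipSelectedTB ω) = unselectedTB ω := by
  obtain ⟨⟨x₁, x₂, x₃⟩, f⟩ := ω
  cases x₃ <;> simp [flipSelectedTB, unselectedTB]

theorem Pr_pTB_true : Pr pTB (fun _ => True) = 1 := by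
  simp only [Pr, pTB, if_true, Fintype.sum_prod_type, Fintype.sum_bool]
  norm_num

/-- in the three-bit DGP the unselected inputs under `e_encode` — the pair
`(unselected informative input, x₃)`, namely `(x₂, x₃)` when `x₃ = 1` and `(x₁, x₃)` when
`x₃ = 0` — are jointly independent of the label `y` (so ROAR scores `e_encode`
optimally). -/
theorem three_bit_unselected_indep_label :
    ∀ (z : Bool × Bool) (c : Bool),
      Pr pTB (fun ω =>
          ((if ω.1.2.2 = true then ω.1.2.1 else ω.1.1), ω.1.2.2) = z ∧ yTB ω = c)
        = Pr pTB (fun ω =>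
            ((if ω.1.2.2 = true then ω.1.2.1 else ω.1.1), ω.1.2.2) = z)
          * Pr pTB (fun ω => yTB ω = c) := by
  intro z c
  have halve := Pr_and_eq_half_of_negating_equiv pTB
    flipSelectedTB_involutive.toPerm pTB_flipSelectedTB
  have hlabel : Pr pTB (fun ω => yTB ω = c) = 1 / 2 := by
    simpa [Pr_pTB_true] using
      halve (fun _ => True) (fun _ => Iff.rfl) yTB yTB_flipSelectedTB c
  have hjoint : Pr pTB (fun ω => unselectedTB ω = z ∧ yTB ω = c)
      = Pr pTB (fun ω => unselectedTB ω = z) / 2 :=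
    halve _ (fun ω => by simp only [Function.Involutive.coe_toPerm, unselectedTB_flipSelectedTB])
      yTB yTB_flipSelectedTB c
  rw [hlabel]
  exact hjoint.trans (div_eq_mul_one_div _ _)
end

section
/- In the three-bit DGP, the padded value of the e_encode explanation is a sufficient statistic for y: P(y = 1 | x) equals 0.9 when the selected value is 1 and 0.1 when the selected value is 0, regardless of which coordinate was selected; hence P(y = 1 | x) = P(y = 1 | val(x_{e(x)})), and FRESH scores e_encode optimally. -/
open scoped Classical

/-!
Write `y = selectedBit x ⊕ flip`, with the flip bit independent of `x` and true with
probability `0.1`. Then `P(y = 1 | x)` is a function `h` of `selectedBit x` alone, and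
`P(y = 1 | selectedBit x = v)`, being an average of `P(y = 1 | x)` over the fibre
`{x | selectedBit x = v}`, equals `h v` as well.
-/

section Sufficiency

variable {Ω α β : Type*} [Fintype Ω] (p : Ω → ℝ)

theorem Pr_mono (hp : 0 ≤ p) {E F : Ω → Prop} (hEF : ∀ ω, E ω → F ω) : Pr p E ≤ Pr p F :=
  Finset.sum_le_sum fun ω _ => by
    by_cases hE : E ω
    · simp [hE, hEF ω hE]
    · rw [if_neg hE]
      split_ifs
      exacts [hp ω, le_rfl]

theorem Pr_eq_sum_Pr_and_eq [Fintype α] (E : Ω → Prop) (X : Ω → α) :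
    Pr p E = ∑ x, Pr p (fun ω => E ω ∧ X ω = x) := by
  unfold Pr
  rw [Finset.sum_comm]
  refine Finset.sum_congr rfl fun ω _ => ?_
  by_cases hE : E ω <;> simp [hE]

theorem Pr_and_comp_and_eq (E : Ω → Prop) (X : Ω → α) (s : α → β) (v : β) (x : α) :
    Pr p (fun ω => (E ω ∧ s (X ω) = v) ∧ X ω = x)
      = if s x = v then Pr p (fun ω => E ω ∧ X ω = x) else 0 := by
  unfold Pr
  split_ifs with hx
  · refine Finset.sum_congr rfl fun ω _ => ?_
    by_cases hX : X ω = x <;> simp [hX, hx]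
  · refine Finset.sum_eq_zero fun ω _ => ?_
    by_cases hX : X ω = x <;> simp [hX, hx]

theorem cPr_eq_of_Pr_and_eq_mul {A B : Ω → Prop} {c : ℝ}
    (h : Pr p (fun ω => A ω ∧ B ω) = c * Pr p B) (hB : Pr p B ≠ 0) : cPr p A B = c := by
  rw [cPr, h, mul_div_cancel_right₀ _ hB]

theorem Pr_and_comp_eq_mul [Fintype α] {A : Ω → Prop} {X : Ω → α} {s : α → β} {h : β → ℝ}
    (hA : ∀ x, Pr p (fun ω => A ω ∧ X ω = x) = h (s x) * Pr p (fun ω => X ω = x)) (v : β) :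
    Pr p (fun ω => A ω ∧ s (X ω) = v) = h v * Pr p (fun ω => s (X ω) = v) := by
  rw [Pr_eq_sum_Pr_and_eq p _ X, Pr_eq_sum_Pr_and_eq p _ X, Finset.mul_sum]
  refine Finset.sum_congr rfl fun x _ => ?_
  have hfiber := Pr_and_comp_and_eq p (fun _ => True) X s v x
  simp only [true_and] at hfiber
  rw [Pr_and_comp_and_eq, hfiber]
  split_ifs with hx
  · rw [hA, hx]
  · rw [mul_zero]

theorem cPr_comp_eq_of_Pr_and_eq_mul [Fintype α] (hp : 0 ≤ p) {A : Ω → Prop} {X : Ω → α}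
    {s : α → β} {h : β → ℝ}
    (hA : ∀ x, Pr p (fun ω => A ω ∧ X ω = x) = h (s x) * Pr p (fun ω => X ω = x))
    {x₀ : α} (hx₀ : 0 < Pr p (fun ω => X ω = x₀)) :
    cPr p A (fun ω => s (X ω) = s x₀) = h (s x₀) := by
  refine cPr_eq_of_Pr_and_eq_mul p (Pr_and_comp_eq_mul p hA (s x₀)) (ne_of_gt ?_)
  exact hx₀.trans_le (Pr_mono p hp fun ω hω => by rw [hω])

end Sufficiency

theorem Pr_and_fst_eq {α γ : Type*} [Fintype α] [Fintype γ] (u : α → ℝ) (q : γ → ℝ)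
    (A : α × γ → Prop) (x₀ : α) :
    Pr (fun ω : α × γ => u ω.1 * q ω.2) (fun ω => A ω ∧ ω.1 = x₀)
      = u x₀ * Pr q (fun f => A (x₀, f)) := by
  unfold Pr
  rw [Fintype.sum_prod_type, Finset.sum_eq_single x₀, Finset.mul_sum]
  · refine Finset.sum_congr rfl fun f _ => ?_
    split_ifs <;> simp_all
  · intro x _ hx
    simp [hx]
  · simp

def selectedBit (x : Bool × Bool × Bool) : Bool :=
  if x.2.2 = true then x.1 else x.2.1

theorem yTB_eq_xor_selectedBit (ω : (Bool × Bool × Bool) × Bool) :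
    yTB ω = xor (selectedBit ω.1) ω.2 := by
  unfold yTB selectedBit
  split_ifs <;> rfl

noncomputable def flipProb (f : Bool) : ℝ :=
  if f = true then 0.1 else 0.9

theorem Pr_pTB_and_fst_eq (A : (Bool × Bool × Bool) × Bool → Prop) (x : Bool × Bool × Bool) :
    Pr pTB (fun ω => A ω ∧ ω.1 = x) = 1 / 8 * Pr flipProb (fun f => A (x, f)) :=
  Pr_and_fst_eq (fun _ => 1 / 8) flipProb A x

theorem Pr_flipProb_xor_eq_true (b : Bool) :
    Pr flipProb (fun f => xor b f = true) = if b = true then 0.9 else 0.1 := by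
  cases b <;> norm_num [Pr, flipProb]

theorem Pr_pTB_fst_eq (x : Bool × Bool × Bool) : Pr pTB (fun ω => ω.1 = x) = 1 / 8 := by
  have h := Pr_pTB_and_fst_eq (fun _ => True) x
  simp only [true_and] at h
  rw [h]
  norm_num [Pr, flipProb]

theorem Pr_pTB_yTB_and_fst_eq (x : Bool × Bool × Bool) :
    Pr pTB (fun ω => yTB ω = true ∧ ω.1 = x)
      = (if selectedBit x = true then 0.9 else 0.1) * Pr pTB (fun ω => ω.1 = x) := by
  rw [Pr_pTB_fst_eq, Pr_pTB_and_fst_eq]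
  simp only [yTB_eq_xor_selectedBit]
  rw [Pr_flipProb_xor_eq_true, mul_comm]

/-- in the three-bit DGP, the padded value of the `e_encode` explanation —
the selected bit `x₁` if `x₃ = 1` else `x₂` — is a sufficient statistic for `y`:
`P(y=1 | x)` is `0.9` when the selected bit is `1` and `0.1` otherwise, and equals
`P(y=1 | val(x_{e(x)}))` (so FRESH scores `e_encode` optimally). -/
theorem three_bit_selected_value_sufficient :
    ∀ x₀ : Bool × Bool × Bool,
      (cPr pTB (fun ω => yTB ω = true) (fun ω => ω.1 = x₀)
          = (if (if x₀.2.2 = true then x₀.1 else x₀.2.1) = true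
              then (0.9 : ℝ) else (0.1 : ℝ)))
      ∧ (cPr pTB (fun ω => yTB ω = true) (fun ω => ω.1 = x₀)
          = cPr pTB (fun ω => yTB ω = true)
              (fun ω => (if ω.1.2.2 = true then ω.1.1 else ω.1.2.1)
                  = (if x₀.2.2 = true then x₀.1 else x₀.2.1))) := by
  intro x₀
  have hpos : ∀ x, 0 < Pr pTB (fun ω => ω.1 = x) := fun x => by
    norm_num [Pr_pTB_fst_eq]
  have hx₀ : cPr pTB (fun ω => yTB ω = true) (fun ω => ω.1 = x₀)
      = if selectedBit x₀ = true then 0.9 else 0.1 :=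
    cPr_eq_of_Pr_and_eq_mul pTB (Pr_pTB_yTB_and_fst_eq x₀) (hpos x₀).ne'
  have hsel := cPr_comp_eq_of_Pr_and_eq_mul pTB (fun ω => by unfold pTB; positivity)
    (X := Prod.fst) (s := selectedBit) (h := fun b => if b = true then 0.9 else 0.1)
    Pr_pTB_yTB_and_fst_eq (hpos x₀)
  exact ⟨hx₀, hx₀.trans hsel.symm⟩
end

section
/- In the three-bit DGP, the encoding explanation e_encode achieves a strictly higher EVAL-X log-likelihood score than the non-encoding constant explanation selecting x₃: EVAL-X(q, e_encode) = 0.9·log 0.7 + 0.1·log 0.3 ≈ −0.44 > log(1/2) ≈ −0.69 = EVAL-X(q, e_c) where e_c(x) ≡ ξ₃. -/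
open scoped Classical

/-!
Conditioning on `x₃` alone says nothing about the label: whatever `x₃` is, `y` is a copy of an
independent uniform bit up to a flip, so every conditional probability is `1/2`. The encoding
explanation reveals, at each point, the coordinate that `y` copies there; but the event it
conditions on does not fix `x₃`, so on half of that event `y` copies the revealed bit and on the
other half it is independent of it. Hence `y` agrees with the revealed bit with probability
`(0.9 + 0.5) / 2 = 0.7`, the score is `0.9 log 0.7 + 0.1 log 0.3`, and this beats `log (1/2)`
by `log x ≤ x - 1`.
-/

open Real

section EvalX

variable {Ω β : Type*} [Fintype Ω]

/-- EVAL-X score; `S ω` is the event that a sample agrees with `ω` on the coordinates the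
explanation selects at `ω`. Averaging over the full sample `ω` (label included) gives the paper's
double expectation by the tower property. -/
noncomputable def evalX (p : Ω → ℝ) (y : Ω → β) (S : Ω → Ω → Prop) : ℝ :=
  ∑ ω, p ω * log (cPr p (fun ω' => y ω' = y ω) (S ω))

variable {p : Ω → ℝ} {y : Ω → β} {S : Ω → Ω → Prop}

theorem evalX_eq_log_of_cPr_eq {c : ℝ} (hp : ∑ ω, p ω = 1)
    (h : ∀ ω, cPr p (fun ω' => y ω' = y ω) (S ω) = c) : evalX p y S = log c := by
  simp only [evalX, h, ← Finset.sum_mul, hp, one_mul]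

theorem evalX_eq_of_cPr_eq_ite {a b : ℝ} (E : Ω → Prop) [DecidablePred E]
    (h : ∀ ω, cPr p (fun ω' => y ω' = y ω) (S ω) = if E ω then a else b) :
    evalX p y S = Pr p E * log a + Pr p (fun ω => ¬ E ω) * log b := by
  simp only [evalX, Pr, h, Finset.sum_mul, ← Finset.sum_add_distrib]
  refine Finset.sum_congr rfl fun ω _ => ?_
  split_ifs <;> simp

end EvalX

theorem sum_pTB : ∑ ω, pTB ω = 1 := by
  simp only [Fintype.sum_prod_type, Fintype.sum_bool, pTB]
  norm_num

theorem Pr_pTB_not_flipped : Pr pTB (fun ω => ω.2 = false) = 0.9 := by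
  simp only [Pr, Fintype.sum_prod_type, Fintype.sum_bool, pTB]
  norm_num

theorem Pr_pTB_flipped : Pr pTB (fun ω => ¬ ω.2 = false) = 0.1 := by
  simp only [Pr, Fintype.sum_prod_type, Fintype.sum_bool, pTB]
  norm_num

theorem cPr_yTB_given_x₃ (ω : (Bool × Bool × Bool) × Bool) :
    cPr pTB (fun ω' => yTB ω' = yTB ω) (fun ω' => ω'.1.2.2 = ω.1.2.2) = 1 / 2 := by
  obtain ⟨⟨x₁, x₂, x₃⟩, f⟩ := ω
  cases x₁ <;> cases x₂ <;> cases x₃ <;> cases f <;>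
    simp only [cPr, Pr, Fintype.sum_prod_type, Fintype.sum_bool, pTB, yTB] <;> norm_num

theorem cPr_yTB_given_encoded (ω : (Bool × Bool × Bool) × Bool) :
    cPr pTB (fun ω' => yTB ω' = yTB ω)
        (fun ω' => if ω.1.2.2 = true then ω'.1.1 = ω.1.1 else ω'.1.2.1 = ω.1.2.1) =
      if ω.2 = false then 0.7 else 0.3 := by
  obtain ⟨⟨x₁, x₂, x₃⟩, f⟩ := ω
  cases x₁ <;> cases x₂ <;> cases x₃ <;> cases f <;>
    simp only [cPr, Pr, Fintype.sum_prod_type, Fintype.sum_bool, pTB, yTB] <;> norm_num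

theorem log_half_lt : log (1 / 2) < 0.9 * log 0.7 + 0.1 * log 0.3 := by
  have h₁ : log (5 / 7) < 5 / 7 - 1 := log_lt_sub_one_of_pos (by norm_num) (by norm_num)
  have h₂ : log (5 / 3) < 5 / 3 - 1 := log_lt_sub_one_of_pos (by norm_num) (by norm_num)
  have e₁ : log 0.7 = log (1 / 2) - log (5 / 7) := by
    rw [← log_div (by norm_num) (by norm_num)]; norm_num
  have e₂ : log 0.3 = log (1 / 2) - log (5 / 3) := by
    rw [← log_div (by norm_num) (by norm_num)]; norm_num
  rw [e₁, e₂]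
  linarith

/-- in the three-bit DGP, the encoding explanation `e_encode` (select
coordinate 1 iff `x₃ = 1`, else coordinate 2) gets EVAL-X score
`0.9·log 0.7 + 0.1·log 0.3`, strictly higher than the score `log (1/2)` of the
non-encoding constant explanation selecting `x₃`. -/
theorem three_bit_evalx_encode_beats_constant :
    ((∑ ω, pTB ω * Real.log (cPr pTB (fun ω' => yTB ω' = yTB ω)
          (fun ω' => if ω.1.2.2 = true then ω'.1.1 = ω.1.1 else ω'.1.2.1 = ω.1.2.1)))
        = 0.9 * Real.log 0.7 + 0.1 * Real.log 0.3)
    ∧ ((∑ ω, pTB ω * Real.log (cPr pTB (fun ω' => yTB ω' = yTB ω)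
          (fun ω' => ω'.1.2.2 = ω.1.2.2)))
        = Real.log (1 / 2))
    ∧ ((∑ ω, pTB ω * Real.log (cPr pTB (fun ω' => yTB ω' = yTB ω)
          (fun ω' => ω'.1.2.2 = ω.1.2.2)))
        < ∑ ω, pTB ω * Real.log (cPr pTB (fun ω' => yTB ω' = yTB ω)
          (fun ω' => if ω.1.2.2 = true then ω'.1.1 = ω.1.1 else ω'.1.2.1 = ω.1.2.1))) := by
  have h_encode : evalX pTB yTB (fun ω ω' =>
      if ω.1.2.2 = true then ω'.1.1 = ω.1.1 else ω'.1.2.1 = ω.1.2.1) =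
        0.9 * log 0.7 + 0.1 * log 0.3 := by
    rw [evalX_eq_of_cPr_eq_ite _ cPr_yTB_given_encoded, Pr_pTB_not_flipped, Pr_pTB_flipped]
  have h_const : evalX pTB yTB (fun ω ω' => ω'.1.2.2 = ω.1.2.2) = log (1 / 2) :=
    evalX_eq_log_of_cPr_eq sum_pTB cPr_yTB_given_x₃
  exact ⟨h_encode, h_const, h_const.trans_lt (log_half_lt.trans_eq h_encode.symm)⟩
end
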